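/- If the map β ↦ (p_k^(h)(β))_{h ∈ {0,1}, 1 ≤ k ≤ K} from ℝ^(p+1) to ℝ^(2K) is injective, then p + 1 ≤ 2K − 1; that is, identifiability of the logistic coefficients from the contingency-table cell probabilities requires the table to provide at least as many degrees of freedom (2K − 1, since the 2K cell probabilities sum to 1) as there are coefficients. -/

import Mathlib

open MeasureTheory ProbabilityTheory Filter Finset Metric
open scoped ENNReal NNReal ProbabilityTheory

/-- The logistic function `σ(t) = eᵗ/(1+eᵗ)`. -/
noncomputable def logistic (t : ℝ) : ℝ := Real.exp t / (1 + Real.exp t)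

/-- Linear predictor `η_β(x) = β₀ + ∑ⱼ xⱼ βⱼ`. -/
noncomputable def eta {p : ℕ} (β : Fin (p + 1) → ℝ) (x : Fin p → ℝ) : ℝ :=
  β 0 + ∑ j : Fin p, x j * β j.succ

/-- `σ(η_β(x))^h (1 - σ(η_β(x)))^(1-h)`. -/
noncomputable def recencyScore {p : ℕ} (β : Fin (p + 1) → ℝ) (h : Fin 2)
    (x : Fin p → ℝ) : ℝ :=
  logistic (eta β x) ^ (h : ℕ) * (1 - logistic (eta β x)) ^ (1 - (h : ℕ))

/-- Contingency-table cell probability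
`p_k^(h)(β) = ∫_{T x ∈ C k} σ(η_β)^h (1-σ(η_β))^(1-h) dμ`. -/
noncomputable def cellProb {p r K : ℕ} (μ : Measure (Fin p → ℝ))
    (T : (Fin p → ℝ) → Fin r → ℝ) (C : Fin K → Set (Fin r → ℝ))
    (h : Fin 2) (k : Fin K) (β : Fin (p + 1) → ℝ) : ℝ :=
  ∫ x in {x | T x ∈ C k}, recencyScore β h x ∂μ


lemma clm_exists_single_ne {n : ℕ} {L : (Fin n → ℝ) →L[ℝ] ℝ} (hL : L ≠ 0) :
    ∃ i : Fin n, L (Pi.single i 1) ≠ 0 := by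
  by_contra hcon
  push_neg at hcon
  apply hL
  ext v
  have hv : v = ∑ i, v i • (fun j => if i = j then (1:ℝ) else 0) := pi_eq_sum_univ v
  rw [hv, map_sum]
  simp only [ContinuousLinearMap.map_smul]
  have : ∀ i : Fin n, (fun j => if i = j then (1:ℝ) else 0) = Pi.single i 1 := by
    intro i; funext j; simp [Pi.single_apply, eq_comm]
  simp only [this, hcon, smul_zero, Finset.sum_const_zero]
  rfl

theorem no_c1_injection : ∀ (m n : ℕ) (s : Set (Fin n → ℝ)) (f : (Fin n → ℝ) → (Fin m → ℝ)),
    m < n → IsOpen s → Convex ℝ s → s.Nonempty → ContDiffOn ℝ 1 f s → Set.InjOn f s → False := by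
  intro m
  induction m with
  | zero =>
    rintro n s f hmn hso hsc ⟨a, ha⟩ hcd hinj
    obtain ⟨ε, hε, hball⟩ := Metric.isOpen_iff.mp hso a ha
    set i0 : Fin n := ⟨0, hmn⟩
    set b := a + (ε/2) • (Pi.single i0 (1:ℝ) : Fin n → ℝ) with hbdef
    have hb : b ∈ s := by
      apply hball
      have : dist b a = ε/2 := by
        rw [hbdef, dist_self_add_left, norm_smul]
        simp [Pi.norm_single, abs_of_pos hε]
      rw [Metric.mem_ball, this]; linarith
    have hba : b = a := hinj hb ha (funext fun j => j.elim0)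
    have : b i0 = a i0 := by rw [hba]
    simp [hbdef, Pi.single_apply] at this
    linarith
  | succ m IH =>
    rintro n s f hmn hso hsc ⟨a0, ha0⟩ hcd hinj
    set fm : (Fin n → ℝ) → ℝ := fun x => f x (Fin.last m) with hfmdef
    have hfm : ContDiffOn ℝ 1 fm s := contDiffOn_pi.mp hcd (Fin.last m)
    by_cases hdeg : ∀ x ∈ s, fderiv ℝ fm x = 0
    · -- degenerate case : last component is constant on s
      have hconst : ∀ x ∈ s, ∀ y ∈ s, fm y = fm x := by
        intro x hx y hy
        have hbd : ∀ z ∈ s, ‖fderivWithin ℝ fm s z‖ ≤ 0 := by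
          intro z hz
          rw [fderivWithin_of_isOpen hso hz, hdeg z hz]
          simp
        have := hsc.norm_image_sub_le_of_norm_fderivWithin_le
          (hfm.differentiableOn one_ne_zero) hbd hx hy
        simp at this
        linarith [abs_nonneg (fm y - fm x), this]
      set g : (Fin n → ℝ) → (Fin m → ℝ) := fun x => fun j => f x j.castSucc with hgdef
      refine IH n s g (by omega) hso hsc ⟨a0, ha0⟩
        (contDiffOn_pi.mpr fun j => contDiffOn_pi.mp hcd j.castSucc) ?_
      intro x hx y hy hgxy
      apply hinj hx hy
      funext j
      induction j using Fin.lastCases with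
      | last => exact (hconst y hy x hx)
      | cast j => exact congrFun hgxy j
    · push_neg at hdeg
      obtain ⟨a, ha, hL⟩ := hdeg
      obtain ⟨n', rfl⟩ : ∃ n', n = n' + 1 := ⟨n - 1, by omega⟩
      have hsnb : s ∈ nhds a := hso.mem_nhds ha
      have hfma : ContDiffAt ℝ 1 fm a := hfm.contDiffAt hsnb
      set L := fderiv ℝ fm a with hLdef
      have hLd : HasFDerivAt fm L a := (hfma.differentiableAt one_ne_zero).hasFDerivAt
      obtain ⟨i, hc⟩ := clm_exists_single_ne hL
      set e : Fin (n' + 1) → ℝ := Pi.single i 1 with hedef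
      set c : ℝ := L e with hcdef
      set prj : (Fin (n' + 1) → ℝ) →L[ℝ] ℝ :=
        ContinuousLinearMap.proj i with hprjdef
      set Xi : (Fin (n' + 1) → ℝ) →L[ℝ] (Fin (n' + 1) → ℝ) :=
        ContinuousLinearMap.id ℝ _ + (L - prj).smulRight e with hXidef
      have hXiapp : ∀ v, Xi v = v + (L v - v i) • e := by
        intro v
        simp [hXidef, hprjdef, ContinuousLinearMap.smulRight_apply]
      have happ_i : ∀ (v : Fin (n' + 1) → ℝ) (t : ℝ), (v + t • e) i = v i + t := by
        intro v t; simp [hedef]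
      have happ_ne : ∀ (v : Fin (n' + 1) → ℝ) (t : ℝ) (j), j ≠ i → (v + t • e) j = v j := by
        intro v t j hj; simp [hedef, Pi.single_apply, hj]
      have hinjXi : Function.Injective Xi := by
        intro u u' huu
        have hz : Xi (u - u') = 0 := by rw [map_sub, huu, sub_self]
        set w := u - u' with hw
        rw [hXiapp] at hz
        have hne : ∀ j, j ≠ i → w j = 0 := by
          intro j hj
          have h0 := congrFun hz j
          rw [happ_ne w _ j hj] at h0
          exact h0
        have hLw : L w = 0 := by
          have h0 := congrFun hz i
          rw [happ_i] at h0
          simp only [Pi.zero_apply] at h0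
          linarith
        have hwi : w = w i • e := by
          funext j
          by_cases hj : j = i
          · subst hj; simp [hedef]
          · rw [hne j hj]; simp [hedef, Pi.single_apply, hj]
        have hmul : w i * c = 0 := by
          rw [hcdef, ← smul_eq_mul, ← _root_.map_smul, ← hwi, hLw]
        have hwi0 : w i = 0 := by
          rcases mul_eq_zero.mp hmul with h | h
          · exact h
          · exact absurd h hc
        have hw0 : w = 0 := by rw [hwi, hwi0, zero_smul]
        have := sub_eq_zero.mp (hw ▸ hw0)
        exact this
      have hsurjXi : Function.Surjective Xi := by
        have := LinearMap.injective_iff_surjective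
          (f := (Xi : (Fin (n' + 1) → ℝ) →ₗ[ℝ] (Fin (n' + 1) → ℝ)))
        exact this.mp hinjXi
      set Xieq : (Fin (n' + 1) → ℝ) ≃L[ℝ] (Fin (n' + 1) → ℝ) :=
        (LinearEquiv.ofBijective (Xi : (Fin (n' + 1) → ℝ) →ₗ[ℝ] (Fin (n' + 1) → ℝ))
          ⟨hinjXi, hsurjXi⟩).toContinuousLinearEquiv with hXieqdef
      have hXieqCLM : (Xieq : (Fin (n' + 1) → ℝ) →L[ℝ] (Fin (n' + 1) → ℝ)) = Xi := by
        ext v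
        rfl
      set Θ : (Fin (n' + 1) → ℝ) → (Fin (n' + 1) → ℝ) :=
        fun x => x + (fm x - x i) • e with hTdef
      have hprojd : HasFDerivAt (fun x : Fin (n' + 1) → ℝ => x i) prj a := prj.hasFDerivAt
      have hTd : HasFDerivAt Θ (Xieq : (Fin (n' + 1) → ℝ) →L[ℝ] (Fin (n' + 1) → ℝ)) a := by
        rw [hXieqCLM, hXidef]
        exact (hasFDerivAt_id a).add ((hLd.sub hprojd).smul_const e)
      have hprojcd : ContDiffAt ℝ 1 (fun x : Fin (n' + 1) → ℝ => x i) a :=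
        prj.contDiff.contDiffAt
      have hTat : ContDiffAt ℝ 1 Θ a :=
        contDiffAt_id.add ((hfma.sub hprojcd).smul contDiffAt_const)
      set ψ : (Fin (n' + 1) → ℝ) → (Fin (n' + 1) → ℝ) :=
        hTat.localInverse hTd one_ne_zero with hpsidef
      have hψat : ContDiffAt ℝ 1 ψ (Θ a) := hTat.to_localInverse hTd one_ne_zero
      have hψa : ψ (Θ a) = a := hTat.localInverse_apply_image hTd one_ne_zero
      have hev : ∀ᶠ w in nhds (Θ a), Θ (ψ w) = w :=
        (hTat.hasStrictFDerivAt' hTd one_ne_zero).eventually_right_inverse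
      obtain ⟨u, hu, hψcd⟩ := hψat.contDiffOn le_rfl (by simp)
      set b := Θ a with hbdef
      have hsψ : ψ ⁻¹' s ∈ nhds b := hψat.continuousAt.preimage_mem_nhds (by rw [hψa]; exact hsnb)
      have hN : ({w | Θ (ψ w) = w} ∩ (u ∩ ψ ⁻¹' s)) ∈ nhds b :=
        Filter.inter_mem hev (Filter.inter_mem hu hsψ)
      obtain ⟨δ, hδpos, hball⟩ := Metric.mem_nhds_iff.mp hN
      set y0 : Fin n' → ℝ := i.removeNth b with hy0def
      have hy0 : i.insertNth (b i) y0 = b := Fin.insertNth_self_removeNth i b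
      set ι : (Fin n' → ℝ) → (Fin (n' + 1) → ℝ) := fun y => i.insertNth (b i) y with hiotadef
      have hιlip : ∀ y y', dist (ι y) (ι y') ≤ dist y y' := by
        intro y y'
        rw [dist_pi_le_iff dist_nonneg]
        intro j
        by_cases hj : j = i
        · subst hj
          simp [hiotadef, Fin.insertNth_apply_same, dist_nonneg]
        · obtain ⟨k, hk⟩ := Fin.exists_succAbove_eq hj
          rw [← hk]
          simp only [hiotadef, Fin.insertNth_apply_succAbove]
          exact dist_le_pi_dist y y' k
      have hιmem : ∀ y ∈ ball y0 δ, ι y ∈ ({w | Θ (ψ w) = w} ∩ (u ∩ ψ ⁻¹' s)) := by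
        intro y hy
        apply hball
        rw [mem_ball]
        calc dist (ι y) b = dist (ι y) (ι y0) := by rw [show ι y0 = b from hy0]
        _ ≤ dist y y0 := hιlip y y0
        _ < δ := hy
      have hιcd : ContDiff ℝ 1 ι := by
        apply contDiff_pi.mpr
        intro j
        by_cases hj : j = i
        · subst hj
          simp only [hiotadef, Fin.insertNth_apply_same]
          exact contDiff_const
        · obtain ⟨k, hk⟩ := Fin.exists_succAbove_eq hj
          have : (fun y : Fin n' → ℝ => ι y j) = fun y => y k := by
            funext y
            rw [← hk]
            simp [hiotadef, Fin.insertNth_apply_succAbove]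
          rw [this]
          exact contDiff_pi.mp contDiff_id k
      set g : (Fin n' → ℝ) → Fin m → ℝ := fun y => fun j => f (ψ (ι y)) j.castSucc with hgdef
      have hgcd : ContDiffOn ℝ 1 g (ball y0 δ) := by
        have htr : ContDiffOn ℝ 1 (fun x => (fun j : Fin m => f x j.castSucc)) s :=
          contDiffOn_pi.mpr fun j => contDiffOn_pi.mp hcd j.castSucc
        have hψι : ContDiffOn ℝ 1 (fun y => ψ (ι y)) (ball y0 δ) :=
          hψcd.comp hιcd.contDiffOn (fun y hy => (hιmem y hy).2.1)
        exact htr.comp hψι (fun y hy => (hιmem y hy).2.2)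
      have hTi : ∀ x, Θ x i = fm x := by
        intro x
        rw [hTdef]
        simp only []
        rw [happ_i]
        ring
      have hlast : ∀ y ∈ ball y0 δ, fm (ψ (ι y)) = b i := by
        intro y hy
        have h1 : Θ (ψ (ι y)) = ι y := (hιmem y hy).1
        have h2 := congrFun h1 i
        rw [hTi] at h2
        rw [h2, hiotadef]
        simp [Fin.insertNth_apply_same]
      have hginj : Set.InjOn g (ball y0 δ) := by
        intro y hy y' hy' hgy
        have hfeq : f (ψ (ι y)) = f (ψ (ι y')) := by
          funext j
          induction j using Fin.lastCases with
          | last =>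
            have := (hlast y hy).trans (hlast y' hy').symm
            exact this
          | cast j => exact congrFun hgy j
        have hxeq : ψ (ι y) = ψ (ι y') :=
          hinj (hιmem y hy).2.2 (hιmem y' hy').2.2 hfeq
        have hieq : ι y = ι y' := by
          rw [← (hιmem y hy).1, ← (hιmem y' hy').1, hxeq]
        funext k
        have := congrFun hieq (i.succAbove k)
        simpa [hiotadef, Fin.insertNth_apply_succAbove] using this
      exact IH n' (ball y0 δ) g (by omega) isOpen_ball (convex_ball _ _)
        ⟨y0, mem_ball_self hδpos⟩ hgcd hginj

noncomputable def dlogistic (t : ℝ) : ℝ := Real.exp t / (1 + Real.exp t) ^ 2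

lemma one_add_exp_pos (t : ℝ) : 0 < 1 + Real.exp t := by positivity

lemma hasDerivAt_logistic (t : ℝ) : HasDerivAt logistic (dlogistic t) t := by
  have h := (Real.hasDerivAt_exp t).div ((hasDerivAt_const t (1:ℝ)).add (Real.hasDerivAt_exp t))
    (ne_of_gt (one_add_exp_pos t))
  convert h using 1
  · rfl
  · rfl
  · rfl
  unfold dlogistic
  simp only [Pi.add_apply]
  field_simp
  ring

lemma continuous_dlogistic : Continuous dlogistic := by
  unfold dlogistic
  exact Real.continuous_exp.div (by continuity) (fun t => by positivity)

lemma dlogistic_abs_le (t : ℝ) : ‖dlogistic t‖ ≤ 1/4 := by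
  rw [Real.norm_eq_abs, abs_of_pos (by unfold dlogistic; positivity)]
  rw [dlogistic, div_le_iff₀ (by positivity)]
  nlinarith [sq_nonneg (1 - Real.exp t), Real.exp_pos t]

lemma logistic_pos (t : ℝ) : 0 < logistic t := by unfold logistic; positivity

lemma logistic_lt_one (t : ℝ) : logistic t < 1 := by
  rw [logistic, div_lt_one (one_add_exp_pos t)]
  linarith

lemma logistic_abs_le (t : ℝ) : ‖logistic t‖ ≤ 1 := by
  rw [Real.norm_eq_abs, abs_of_pos (logistic_pos t)]
  exact le_of_lt (logistic_lt_one t)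

lemma logistic_lip (s t : ℝ) : ‖logistic s - logistic t‖ ≤ 1/4 * ‖s - t‖ := by
  have := convex_univ.norm_image_sub_le_of_norm_hasDerivWithin_le
    (f := logistic) (f' := dlogistic) (C := 1/4)
    (fun x _ => (hasDerivAt_logistic x).hasDerivWithinAt)
    (fun x _ => dlogistic_abs_le x) (Set.mem_univ t) (Set.mem_univ s)
  exact this

noncomputable def etaD {p : ℕ} (x : Fin p → ℝ) : (Fin (p+1) → ℝ) →L[ℝ] ℝ :=
  ContinuousLinearMap.proj 0 + ∑ j : Fin p, x j • ContinuousLinearMap.proj j.succ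

lemma etaD_apply {p : ℕ} (x : Fin p → ℝ) (β : Fin (p+1) → ℝ) : etaD x β = eta β x := by
  simp [etaD, eta, ContinuousLinearMap.sum_apply, smul_eq_mul]

lemma etaD_norm {p : ℕ} (x : Fin p → ℝ) : ‖etaD x‖ ≤ 1 + ∑ j, |x j| := by
  apply ContinuousLinearMap.opNorm_le_bound _ (by positivity)
  intro v
  rw [etaD_apply]
  unfold eta
  calc ‖v 0 + ∑ j, x j * v j.succ‖ ≤ ‖v 0‖ + ‖∑ j, x j * v j.succ‖ := norm_add_le _ _
    _ ≤ ‖v 0‖ + ∑ j, ‖x j * v j.succ‖ := add_le_add (le_refl ‖v 0‖) (norm_sum_le Finset.univ (fun j => x j * v j.succ))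
    _ ≤ ‖v‖ + ∑ j, |x j| * ‖v‖ := by
        apply add_le_add (norm_le_pi_norm v 0)
        apply Finset.sum_le_sum
        intro j _
        rw [norm_mul, Real.norm_eq_abs]
        exact mul_le_mul_of_nonneg_left (norm_le_pi_norm v _) (abs_nonneg _)
    _ = (1 + ∑ j, |x j|) * ‖v‖ := by rw [add_mul, one_mul, Finset.sum_mul]

lemma etaD_cont {p : ℕ} : Continuous (fun x : Fin p → ℝ => etaD x) := by
  unfold etaD
  exact continuous_const.add
    (continuous_finset_sum _ fun j _ => (continuous_apply j).smul continuous_const)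

lemma eta_cont_beta {p : ℕ} (x : Fin p → ℝ) : Continuous (fun β : Fin (p+1) → ℝ => eta β x) := by
  rw [show (fun β : Fin (p+1) → ℝ => eta β x) = ⇑(etaD x) from funext fun β => (etaD_apply x β).symm]
  exact (etaD x).continuous

lemma eta_cont_x {p : ℕ} (β : Fin (p+1) → ℝ) : Continuous (fun x : Fin p → ℝ => eta β x) := by
  unfold eta
  exact continuous_const.add
    (continuous_finset_sum _ fun j _ => (continuous_apply j).mul continuous_const)

lemma key_contdiff {p : ℕ} (μ : Measure (Fin p → ℝ)) [IsProbabilityMeasure μ]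
    (hint : ∀ j, Integrable (fun x => x j) μ) (A : Set (Fin p → ℝ)) (hA : MeasurableSet A) :
    ContDiff ℝ 1 (fun β : Fin (p+1) → ℝ =>
      ∫ x, A.indicator (fun x => logistic (eta β x)) x ∂μ) := by
  set w : (Fin p → ℝ) → ℝ := fun x => (1/4) * (1 + ∑ j, |x j|) with hwdef
  have hwint : Integrable w μ := by
    apply Integrable.const_mul
    exact (integrable_const (1:ℝ)).add (integrable_finset_sum _ fun j _ => (hint j).abs)
  set F : (Fin (p+1) → ℝ) → (Fin p → ℝ) → ℝ :=
    fun β => A.indicator (fun x => logistic (eta β x)) with hFdef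
  set G : (Fin (p+1) → ℝ) → (Fin p → ℝ) → ((Fin (p+1) → ℝ) →L[ℝ] ℝ) :=
    fun β => A.indicator (fun x => dlogistic (eta β x) • etaD x) with hGdef
  have hFmeas : ∀ β, AEStronglyMeasurable (F β) μ := fun β =>
    (((Real.continuous_exp.div (by continuity) fun t => ne_of_gt (one_add_exp_pos t)).comp
      (eta_cont_x β)).aestronglyMeasurable).indicator hA
  have hGmeas : ∀ β, AEStronglyMeasurable (G β) μ := fun β =>
    ((((continuous_dlogistic.comp (eta_cont_x β)).smul etaD_cont)).aestronglyMeasurable).indicator hA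
  have hGbound : ∀ β x, ‖G β x‖ ≤ w x := by
    intro β x
    simp only [hGdef]
    by_cases hx : x ∈ A
    · rw [Set.indicator_of_mem hx]
      refine (norm_smul_le (dlogistic (eta β x)) (etaD x)).trans ?_
      rw [hwdef]
      exact mul_le_mul (dlogistic_abs_le _) (etaD_norm x) (norm_nonneg _) (by norm_num)
    · rw [Set.indicator_of_notMem hx]
      simp only [norm_zero]
      rw [hwdef]
      positivity
  have hFint : ∀ β, Integrable (F β) μ := by
    intro β
    apply Integrable.mono' (integrable_const (1:ℝ)) (hFmeas β)
    apply Filter.Eventually.of_forall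
    intro x
    simp only [hFdef]
    by_cases hx : x ∈ A
    · rw [Set.indicator_of_mem hx]; exact logistic_abs_le _
    · rw [Set.indicator_of_notMem hx]; simp
  have hderiv : ∀ β, HasFDerivAt (fun β => ∫ x, F β x ∂μ) (∫ x, G β x ∂μ) β := by
    intro β
    refine (hasFDerivAt_integral_of_dominated_loc_of_lip' (Metric.ball_mem_nhds β one_pos)
      (fun β' _ => hFmeas β') (hFint β) (hGmeas β) ?_ hwint ?_).2
    · apply Filter.Eventually.of_forall
      intro x β' _
      simp only [hFdef]
      by_cases hx : x ∈ A
      · rw [Set.indicator_of_mem hx, Set.indicator_of_mem hx]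
        calc ‖logistic (eta β' x) - logistic (eta β x)‖
            ≤ 1/4 * ‖eta β' x - eta β x‖ := logistic_lip _ _
          _ = 1/4 * ‖etaD x (β' - β)‖ := by rw [map_sub, etaD_apply, etaD_apply]
          _ ≤ 1/4 * (‖etaD x‖ * ‖β' - β‖) := by
              gcongr
              exact (etaD x).le_opNorm _
          _ ≤ (1/4 * (1 + ∑ j, |x j|)) * ‖β' - β‖ := by
              rw [← mul_assoc]
              apply mul_le_mul_of_nonneg_right _ (norm_nonneg _)
              have h := etaD_norm x
              linarith
          _ = w x * ‖β' - β‖ := by rw [hwdef]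
      · rw [Set.indicator_of_notMem hx, Set.indicator_of_notMem hx, sub_self, norm_zero]
        have : (0:ℝ) ≤ w x * ‖β' - β‖ := by
          apply mul_nonneg _ (norm_nonneg _)
          rw [hwdef]; positivity
        exact this
    · apply Filter.Eventually.of_forall
      intro x
      simp only [hFdef, hGdef]
      by_cases hx : x ∈ A
      · simp only [Set.indicator_of_mem hx]
        have h1 : HasFDerivAt (fun β : Fin (p+1) → ℝ => eta β x) (etaD x) β := by
          have := (etaD x).hasFDerivAt (x := β)
          rwa [show ⇑(etaD x) = fun β : Fin (p+1) → ℝ => eta β x from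
            funext fun β => etaD_apply x β] at this
        exact (hasDerivAt_logistic (eta β x)).comp_hasFDerivAt β h1
      · simp only [Set.indicator_of_notMem hx]
        exact hasFDerivAt_const 0 β
  have hdiff : Differentiable ℝ (fun β : Fin (p+1) → ℝ => ∫ x, F β x ∂μ) :=
    fun β => (hderiv β).differentiableAt
  rw [contDiff_one_iff_fderiv]
  refine ⟨hdiff, ?_⟩
  have hfd : (fderiv ℝ fun β : Fin (p+1) → ℝ => ∫ x, F β x ∂μ)
      = fun β => ∫ x, G β x ∂μ := funext fun β => (hderiv β).fderiv
  rw [hfd]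
  rw [continuous_iff_continuousAt]
  intro β
  apply continuousAt_of_dominated (bound := w)
  · exact Filter.Eventually.of_forall (fun β' => hGmeas β')
  · exact Filter.Eventually.of_forall (fun β' =>
      Filter.Eventually.of_forall (fun x => hGbound β' x))
  · exact hwint
  · apply Filter.Eventually.of_forall
    intro x
    simp only [hGdef]
    by_cases hx : x ∈ A
    · simp only [Set.indicator_of_mem hx]
      exact ((continuous_dlogistic.comp (eta_cont_beta x)).smul continuous_const).continuousAt
    · simp only [Set.indicator_of_notMem hx]
      exact continuousAt_const

/-- **Identifiability requires enough degrees of freedom.** If the map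
`β ↦ (p_k^(h)(β))_{h,k}` from `ℝ^(p+1)` to `ℝ^(2K)` is injective, then `p + 1 ≤ 2K − 1`. -/
theorem identifiability_requires_degrees_of_freedom
    {p r K : ℕ} (hp : 1 ≤ p) (hr : 1 ≤ r) (hrp : r ≤ p)
    (μ : Measure (Fin p → ℝ)) [IsProbabilityMeasure μ]
    (hmom : ∀ j : Fin p, MemLp (fun x => x j) 2 μ)
    (T : (Fin p → ℝ) → Fin r → ℝ) (hT : ∀ x j, T x j = x (Fin.castLE hrp j))
    (C : Fin K → Set (Fin r → ℝ)) (hCmeas : ∀ k, MeasurableSet (C k))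
    (hCdisj : Pairwise fun k l => Disjoint (C k) (C l))
    (hCcover : (⋃ k, C k) = Set.univ)
    (hinj : Function.Injective
      (fun β : Fin (p + 1) → ℝ => fun hk : Fin 2 × Fin K => cellProb μ T C hk.1 hk.2 β)) :
    p + 1 ≤ 2 * K - 1 := by
  
  by_contra hcon
  push_neg at hcon
  have hK : 1 ≤ K := by
    by_contra hK0
    push_neg at hK0
    have hK00 : K = 0 := by omega
    subst hK00
    have h0 : ((fun _ => 0) : Fin r → ℝ) ∈ ⋃ k, C k := by
      rw [hCcover]; trivial
    obtain ⟨_, ⟨k, _⟩, _⟩ := h0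
    exact k.elim0
  have hKp : K < p + 1 := by omega
  set A : Fin K → Set (Fin p → ℝ) := fun k => {x | T x ∈ C k} with hAdef
  have hTmeas : Measurable T := by
    have hTfun : T = fun x => fun j => x (Fin.castLE hrp j) :=
      funext fun x => funext fun j => hT x j
    rw [hTfun]
    exact measurable_pi_lambda _ fun j => measurable_pi_apply _
  have hAmeas : ∀ k, MeasurableSet (A k) := fun k => hTmeas (hCmeas k)
  have hint : ∀ j, Integrable (fun x => x j) μ := fun j => (hmom j).integrable one_le_two
  set Ψ : (Fin (p + 1) → ℝ) → (Fin K → ℝ) :=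
    fun β => fun k => ∫ x, (A k).indicator (fun x => logistic (eta β x)) x ∂μ with hPsidef
  have hΨcd : ContDiff ℝ 1 Ψ := contDiff_pi.mpr fun k => key_contdiff μ hint (A k) (hAmeas k)
  have hIOn : ∀ (β : Fin (p + 1) → ℝ) k,
      IntegrableOn (fun x => logistic (eta β x)) (A k) μ := by
    intro β k
    apply Integrable.integrableOn
    apply Integrable.mono' (integrable_const (1:ℝ))
      (((Real.continuous_exp.div (by continuity) fun t =>
        ne_of_gt (one_add_exp_pos t)).comp (eta_cont_x β)).aestronglyMeasurable)
    exact Filter.Eventually.of_forall fun x => logistic_abs_le _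
  have hcell1 : ∀ (β : Fin (p + 1) → ℝ) k,
      cellProb μ T C 1 k β = ∫ x in A k, logistic (eta β x) ∂μ := by
    intro β k
    unfold cellProb
    apply integral_congr_ae
    apply Filter.Eventually.of_forall
    intro x
    unfold recencyScore
    norm_num
  have hPsi1 : ∀ (β : Fin (p + 1) → ℝ) k, Ψ β k = cellProb μ T C 1 k β := by
    intro β k
    rw [hcell1, hPsidef]
    exact integral_indicator (hAmeas k)
  have hcell0 : ∀ (β : Fin (p + 1) → ℝ) k,
      cellProb μ T C 0 k β = (μ (A k)).toReal - cellProb μ T C 1 k β := by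
    intro β k
    rw [hcell1]
    unfold cellProb
    have hstep : ∫ x in A k, recencyScore β 0 x ∂μ
        = ∫ x in A k, ((1:ℝ) - logistic (eta β x)) ∂μ := by
      apply integral_congr_ae
      apply Filter.Eventually.of_forall
      intro x
      unfold recencyScore
      norm_num
    rw [hstep, integral_sub (integrableOn_const (C := (1:ℝ)) (measure_ne_top μ _)) (hIOn β k)]
    simp [Measure.restrict_apply_univ, Measure.real]
  have hΨinj : Function.Injective Ψ := by
    intro β β' hββ
    apply hinj
    funext hk
    have hval : hk.1 = 0 ∨ hk.1 = 1 := by omega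
    have h1 : cellProb μ T C 1 hk.2 β = cellProb μ T C 1 hk.2 β' := by
      rw [← hPsi1, ← hPsi1, hββ]
    rcases hval with hv | hv
    · show cellProb μ T C hk.1 hk.2 β = cellProb μ T C hk.1 hk.2 β'
      rw [hv, hcell0, hcell0, h1]
    · show cellProb μ T C hk.1 hk.2 β = cellProb μ T C hk.1 hk.2 β'
      rw [hv]
      exact h1
  exact no_c1_injection K (p + 1) Set.univ Ψ hKp isOpen_univ convex_univ
    ⟨0, trivial⟩ hΨcd.contDiffOn hΨinj.injOn
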